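/- Let r ≥ 2 be an integer, δ > 0, and define ω₀ = 2^{(r−1)/2} δ^{−(r+1)/2} β_{r−1} ∫_0^{+∞} e^{−x} x^{(r−1)/2} dx, where β_{r−1} = π^{(r−1)/2}/Γ((r−1)/2 + 1). Let V be a real inner product space of dimension r with Lebesgue measure, λ ∈ V* with max_{‖v‖≤1} λ(v) = δ. Then there exists C > 0 such that for all T > 0, |∫_{B_T} e^{λ(v)} dv − ω₀ T^{(r−1)/2} e^{δT}| ≤ C T^{(r−3)/2} e^{δT}, where B_T is the open ball of radius T centered at 0 in V. -/

import Mathlib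

/-!
Writing `λ = δ ⟪w, ·⟫` with `‖w‖ = 1` (Riesz representation plus the equality case of
Cauchy–Schwarz), slice the ball orthogonally to `w`: the slice at height `t` is an
`(r - 1)`-ball of radius `√(T² - t²)`, so with `p = (r - 1) / 2` the integral equals
`β_{r-1} ∫_{-T}^{T} e^{δt} (T² - t²)^p dt`. The substitution `x = δ (T - t)` turns this into
`β_{r-1} δ⁻¹ (2T/δ)^p e^{δT} J(2δT)`, where `J(a) = ∫_0^a e^{-x} x^p (1 - x/a)^p dx` is
`dampedGammaIntegral p a`; and `0 ≤ 1 - (1 - u)^p ≤ max 1 p · u` gives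
`|J(a) - Γ(p + 1)| ≤ max 1 p · Γ(p + 2) / a`.
-/

open MeasureTheory Set Real Metric Module
open scoped RealInnerProductSpace

lemma apply_eq_mul_inner_of_forall_norm_le_one {V : Type*} [NormedAddCommGroup V]
    [InnerProductSpace ℝ V] [CompleteSpace V] {ℓ : V →L[ℝ] ℝ} {w : V} {δ : ℝ} (hw : ‖w‖ = 1)
    (hℓw : ℓ w = δ) (hmax : ∀ v : V, ‖v‖ ≤ 1 → ℓ v ≤ δ) (v : V) :
    ℓ v = δ * ⟪w, v⟫ := by
  have hδ : 0 ≤ δ := by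
    have := hmax (-w) (by rw [norm_neg, hw])
    rw [map_neg, hℓw] at this
    linarith
  set y := (InnerProductSpace.toDual ℝ V).symm ℓ
  have hy : ∀ v, ⟪y, v⟫ = ℓ v := fun v => InnerProductSpace.toDual_symm_apply
  have hnorm_le : ‖y‖ ≤ δ := by
    rw [LinearIsometryEquiv.norm_map]
    refine ContinuousLinearMap.opNorm_le_of_unit_norm hδ fun u hu => abs_le.2 ⟨?_, hmax u hu.le⟩
    have := hmax (-u) (by rw [norm_neg, hu])
    rw [map_neg] at this
    linarith
  have hnorm_ge : δ ≤ ‖y‖ := by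
    simpa [hy, hℓw, hw] using real_inner_le_norm y w
  -- equality in Cauchy–Schwarz forces `y` to be parallel to `w`
  have hyw : y = δ • w := by
    have hcs : ⟪y, w⟫ = ‖y‖ * ‖w‖ := by rw [hy, hℓw, hw, mul_one]; linarith
    have := inner_eq_norm_mul_iff_real.1 hcs
    rwa [hw, one_smul, le_antisymm hnorm_le hnorm_ge] at this
  rw [← hy, hyw, real_inner_smul_left]

lemma one_sub_one_sub_rpow_le {p u : ℝ} (hu₀ : 0 ≤ u) (hu₁ : u ≤ 1) :
    1 - (1 - u) ^ p ≤ max 1 p * u := by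
  rcases le_total p 1 with hp | hp
  · have := self_le_rpow_of_le_one (sub_nonneg.2 hu₁) (by linarith) hp
    nlinarith [le_max_left 1 p]
  · have := one_add_mul_self_le_rpow_one_add (s := -u) (by linarith) hp
    rw [← sub_eq_add_neg] at this
    nlinarith [le_max_right 1 p]

lemma integral_exp_neg_mul_rpow_eq_Gamma {p : ℝ} (hp : -1 < p) :
    ∫ x in Ioi (0 : ℝ), exp (-x) * x ^ p = Gamma (p + 1) := by
  simp [Gamma_eq_integral (by linarith : 0 < p + 1)]

lemma integrableOn_exp_neg_mul_rpow {p : ℝ} (hp : -1 < p) :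
    IntegrableOn (fun x : ℝ => exp (-x) * x ^ p) (Ioi 0) := by
  simpa using GammaIntegral_convergent (by linarith : 0 < p + 1)

noncomputable def dampedGammaIntegral (p a : ℝ) : ℝ :=
  ∫ x in Ioc 0 a, exp (-x) * x ^ p * (1 - x / a) ^ p

lemma abs_dampedGammaIntegral_sub_Gamma_le {p a : ℝ} (hp : 0 ≤ p) (ha : 0 < a) :
    |dampedGammaIntegral p a - Gamma (p + 1)| ≤ max 1 p * Gamma (p + 2) / a := by
  set f : ℝ → ℝ := fun x => exp (-x) * x ^ p
  set F : ℝ → ℝ := (Ioc 0 a).indicator fun x => f x * (1 - x / a) ^ p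
  have hf : IntegrableOn f (Ioi 0) := integrableOn_exp_neg_mul_rpow (by linarith)
  have hF : IntegrableOn F (Ioi 0) := by
    refine (Continuous.integrableOn_Ioc ?_).integrable_indicator measurableSet_Ioc |>.integrableOn
    have := continuous_rpow_const hp
    fun_prop
  have hJ : dampedGammaIntegral p a = ∫ x in Ioi 0, F x := by
    rw [setIntegral_indicator measurableSet_Ioc, inter_eq_right.2 Ioc_subset_Ioi_self]
    rfl
  have hbound : ∀ x ∈ Ioi (0 : ℝ), ‖F x - f x‖ ≤ max 1 p / a * (exp (-x) * x ^ (p + 1)) := by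
    intro x (hx : 0 < x)
    have hfx : 0 ≤ f x := by simp only [f]; positivity
    rw [rpow_add_one hx.ne', Real.norm_eq_abs]
    by_cases hxa : x ≤ a
    · have hu : x / a ≤ 1 := (div_le_one ha).2 hxa
      have hu₀ : 0 ≤ x / a := div_nonneg hx.le ha.le
      have h1 : (1 - x / a) ^ p ≤ 1 := rpow_le_one (by linarith) (by linarith) hp
      have h2 := one_sub_one_sub_rpow_le (p := p) hu₀ hu
      rw [show F x = f x * (1 - x / a) ^ p from indicator_of_mem (by exact ⟨hx, hxa⟩) _,
        show f x * (1 - x / a) ^ p - f x = -(f x * (1 - (1 - x / a) ^ p)) by ring, abs_neg,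
        abs_of_nonneg (mul_nonneg hfx (by linarith))]
      calc f x * (1 - (1 - x / a) ^ p) ≤ f x * (max 1 p * (x / a)) := by gcongr
        _ = _ := by simp only [f]; ring
    · have h1 : 1 ≤ max 1 p * (x / a) := le_trans ((one_le_div ha).2 (by linarith))
        (le_mul_of_one_le_left (by positivity) (le_max_left 1 p))
      rw [show F x = 0 from indicator_of_notMem (fun h => hxa h.2) _, zero_sub, abs_neg,
        abs_of_nonneg hfx]
      calc f x ≤ f x * (max 1 p * (x / a)) := le_mul_of_one_le_right hfx h1
        _ = _ := by simp only [f]; ring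
  calc |dampedGammaIntegral p a - Gamma (p + 1)|
      = ‖∫ x in Ioi 0, (F x - f x)‖ := by
        rw [integral_sub hF hf, hJ, integral_exp_neg_mul_rpow_eq_Gamma (by linarith),
          Real.norm_eq_abs]
    _ ≤ ∫ x in Ioi 0, max 1 p / a * (exp (-x) * x ^ (p + 1)) :=
        norm_integral_le_of_norm_le ((integrableOn_exp_neg_mul_rpow (by linarith)).const_mul _)
          (ae_restrict_of_forall_mem measurableSet_Ioi hbound)
    _ = max 1 p * Gamma (p + 2) / a := by
        rw [integral_const_mul, integral_exp_neg_mul_rpow_eq_Gamma (by linarith),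
          show p + 1 + 1 = p + 2 by ring]
        ring

lemma integral_exp_mul_mul_sq_sub_sq_rpow (p : ℝ) {δ T : ℝ} (hδ : 0 < δ) (hT : 0 < T) :
    ∫ t in -T..T, exp (δ * t) * (T ^ 2 - t ^ 2) ^ p =
      δ⁻¹ * (2 * T / δ) ^ p * exp (δ * T) * dampedGammaIntegral p (2 * δ * T) := by
  set h : ℝ → ℝ := fun t => exp (δ * t) * (T ^ 2 - t ^ 2) ^ p
  have hsubst : ∫ t in -T..T, h t = δ⁻¹ * ∫ x in 0..2 * δ * T, h (T - x / δ) := by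
    rw [intervalIntegral.integral_comp_sub_div _ hδ.ne', smul_eq_mul,
      inv_mul_cancel_left₀ hδ.ne']
    congr 1 <;> field_simp <;> ring
  have hpoint : EqOn (fun x => h (T - x / δ))
      (fun x => (2 * T / δ) ^ p * exp (δ * T) * (exp (-x) * x ^ p * (1 - x / (2 * δ * T)) ^ p))
      (uIcc 0 (2 * δ * T)) := by
    intro x hx
    rw [uIcc_of_le (by positivity)] at hx
    obtain ⟨hx₀, hx₁⟩ := hx
    have hfac : 0 ≤ 1 - x / (2 * δ * T) := by
      rw [sub_nonneg, div_le_one (by positivity)]; exact hx₁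
    have hsq : T ^ 2 - (T - x / δ) ^ 2 = 2 * T / δ * (x * (1 - x / (2 * δ * T))) := by
      field_simp; ring
    simp only [h]
    rw [hsq, mul_rpow (by positivity) (by positivity), mul_rpow hx₀ hfac,
      show δ * (T - x / δ) = δ * T + -x by field_simp; ring, exp_add]
    ring
  rw [hsubst, intervalIntegral.integral_congr hpoint, intervalIntegral.integral_const_mul,
    intervalIntegral.integral_of_le (by positivity), dampedGammaIntegral]
  ring

lemma setIntegral_ball_euclideanSpace_comp_apply_zero {g : ℝ → ℝ} (hg : Continuous g) (n : ℕ)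
    {T : ℝ} (hT : 0 ≤ T) :
    ∫ y in ball (0 : EuclideanSpace ℝ (Fin (n + 1))) T, g (y 0) =
      ∫ t in -T..T, g t * volume.real (ball (0 : EuclideanSpace ℝ (Fin n)) √(T ^ 2 - t ^ 2)) := by
  let e : ℝ × (Fin n → ℝ) ≃ᵐ EuclideanSpace ℝ (Fin (n + 1)) :=
    (MeasurableEquiv.piFinSuccAbove (fun _ => ℝ) 0).symm.trans (MeasurableEquiv.toLp 2 _)
  have he : MeasurePreserving e :=
    (PiLp.volume_preserving_toLp _).comp (volume_preserving_piFinSuccAbove _ 0).symm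
  set A := e ⁻¹' ball 0 T
  have hA : MeasurableSet A := measurableSet_ball.preimage e.measurable
  have hmem : ∀ t y,
      (t, y) ∈ A ↔ WithLp.toLp 2 y ∈ ball (0 : EuclideanSpace ℝ (Fin n)) √(T ^ 2 - t ^ 2) := by
    intro t y
    simp only [A, mem_preimage, mem_ball_zero_iff]
    rw [← sq_lt_sq₀ (norm_nonneg _) hT, lt_sqrt (norm_nonneg _),
      EuclideanSpace.norm_sq_eq, EuclideanSpace.norm_sq_eq, Fin.sum_univ_succ, lt_sub_iff_add_lt']
    simp [e, MeasurableEquiv.piFinSuccAbove_symm_apply, Fin.insertNthEquiv_zero]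
  have hint : Integrable (A.indicator fun z => g z.1) := by
    refine IntegrableOn.integrable_indicator ?_ hA
    have hcont : Continuous fun y : EuclideanSpace ℝ (Fin (n + 1)) => g (y 0) := by fun_prop
    have hball : IntegrableOn (fun y : EuclideanSpace ℝ (Fin (n + 1)) => g (y 0)) (ball 0 T) :=
      (hcont.continuousOn.integrableOn_compact (isCompact_closedBall 0 T)).mono_set
        ball_subset_closedBall
    exact (he.integrableOn_comp_preimage e.measurableEmbedding).2 hball
  have hslice : ∀ t, ∫ y, A.indicator (fun z => g z.1) (t, y) =
      g t * volume.real (ball (0 : EuclideanSpace ℝ (Fin n)) √(T ^ 2 - t ^ 2)) := by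
    intro t
    have hto := PiLp.volume_preserving_toLp (Fin n)
    have : (fun y => A.indicator (fun z => g z.1) (t, y)) =
        (WithLp.toLp 2 ⁻¹' ball 0 √(T ^ 2 - t ^ 2)).indicator fun _ => g t := by
      ext y
      classical
      rw [indicator_apply, indicator_apply]
      exact if_congr (hmem t y) rfl rfl
    rw [this, integral_indicator_const _ (measurableSet_ball.preimage hto.measurable),
      hto.measureReal_preimage measurableSet_ball.nullMeasurableSet, smul_eq_mul, mul_comm]
  have hvanish : ∀ t ∉ Ioc (-T) T,
      g t * volume.real (ball (0 : EuclideanSpace ℝ (Fin n)) √(T ^ 2 - t ^ 2)) = 0 := by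
    intro t ht
    have : T ^ 2 - t ^ 2 ≤ 0 := by
      rw [mem_Ioc, not_and_or, not_lt, not_le] at ht
      rcases ht with h | h <;> nlinarith
    rw [sqrt_eq_zero_of_nonpos this, ball_zero, measureReal_empty, mul_zero]
  calc ∫ y in ball (0 : EuclideanSpace ℝ (Fin (n + 1))) T, g (y 0)
      = ∫ z in A, g z.1 := by
        rw [← he.setIntegral_preimage_emb e.measurableEmbedding]
        simp only [e, A, MeasurableEquiv.trans_apply, MeasurableEquiv.piFinSuccAbove_symm_apply,
          Fin.insertNthEquiv_zero, MeasurableEquiv.toLp_apply, Fin.consEquiv_apply, Fin.cons_zero]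
    _ = ∫ t, g t * volume.real (ball (0 : EuclideanSpace ℝ (Fin n)) √(T ^ 2 - t ^ 2)) := by
        rw [← integral_indicator hA, Measure.volume_eq_prod, integral_prod _ hint]
        simp_rw [hslice]
    _ = _ := by
        rw [← setIntegral_eq_integral_of_forall_compl_eq_zero hvanish,
          intervalIntegral.integral_of_le (by linarith)]

lemma setIntegral_ball_comp_inner_eq_euclideanSpace {V E : Type*} [NormedAddCommGroup V]
    [InnerProductSpace ℝ V] [FiniteDimensional ℝ V] [MeasurableSpace V] [BorelSpace V]
    [NormedAddCommGroup E] [NormedSpace ℝ E] {n : ℕ} (hdim : finrank ℝ V = n + 1) {w : V}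
    (hw : ‖w‖ = 1) (g : ℝ → E) (T : ℝ) :
    ∫ v in ball (0 : V) T, g ⟪w, v⟫ =
      ∫ y in ball (0 : EuclideanSpace ℝ (Fin (n + 1))) T, g (y 0) := by
  obtain ⟨b, hb⟩ : ∃ b : OrthonormalBasis (Fin (n + 1)) ℝ V,
      ∀ i ∈ ({0} : Set (Fin (n + 1))), b i = w := by
    refine Orthonormal.exists_orthonormalBasis_extension_of_card_eq (v := fun _ => w)
      (by simp [hdim]) ?_
    have := uniqueSingleton (0 : Fin (n + 1))
    exact ⟨fun _ => by simpa using hw, fun i j hij => absurd (Subsingleton.elim i j) hij⟩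
  rw [← b.measurePreserving_repr.setIntegral_preimage_emb b.repr.toHomeomorph.measurableEmbedding,
    LinearIsometryEquiv.preimage_ball, map_zero, ← hb 0 rfl]
  simp_rw [b.repr_apply_apply]

lemma setIntegral_ball_comp_inner {V : Type*} [NormedAddCommGroup V]
    [InnerProductSpace ℝ V] [FiniteDimensional ℝ V] [MeasurableSpace V] [BorelSpace V]
    {n : ℕ} (hn : n ≠ 0) (hdim : finrank ℝ V = n + 1) {w : V} (hw : ‖w‖ = 1)
    {g : ℝ → ℝ} (hg : Continuous g) {T : ℝ} (hT : 0 ≤ T) :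
    ∫ v in ball (0 : V) T, g ⟪w, v⟫ = π ^ (n / 2 : ℝ) / Gamma (n / 2 + 1) *
      ∫ t in -T..T, g t * (T ^ 2 - t ^ 2) ^ (n / 2 : ℝ) := by
  have : Nonempty (Fin n) := ⟨⟨0, Nat.pos_of_ne_zero hn⟩⟩
  rw [setIntegral_ball_comp_inner_eq_euclideanSpace hdim hw,
    setIntegral_ball_euclideanSpace_comp_apply_zero hg n hT, ← intervalIntegral.integral_const_mul]
  refine intervalIntegral.integral_congr fun t ht => ?_
  have ht : 0 ≤ T ^ 2 - t ^ 2 := by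
    rw [uIcc_of_le (by linarith)] at ht
    nlinarith [ht.1, ht.2]
  have hvol : volume.real (ball (0 : EuclideanSpace ℝ (Fin n)) √(T ^ 2 - t ^ 2)) =
      √(T ^ 2 - t ^ 2) ^ n * (√π ^ n / Gamma (n / 2 + 1)) := by
    rw [measureReal_def, EuclideanSpace.volume_ball, Fintype.card_fin, ENNReal.toReal_mul,
      ENNReal.toReal_pow, ENNReal.toReal_ofReal (sqrt_nonneg _),
      ENNReal.toReal_ofReal (by positivity)]
  rw [hvol, rpow_div_two_eq_sqrt _ pi_pos.le, rpow_div_two_eq_sqrt _ ht, rpow_natCast,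
    rpow_natCast]
  ring

lemma setIntegral_ball_exp_mul_inner {V : Type*} [NormedAddCommGroup V]
    [InnerProductSpace ℝ V] [FiniteDimensional ℝ V] [MeasurableSpace V] [BorelSpace V]
    {n : ℕ} (hn : n ≠ 0) (hdim : finrank ℝ V = n + 1) {w : V} (hw : ‖w‖ = 1)
    {δ T : ℝ} (hδ : 0 < δ) (hT : 0 < T) :
    ∫ v in ball (0 : V) T, exp (δ * ⟪w, v⟫) =
      π ^ (n / 2 : ℝ) / Gamma (n / 2 + 1) * δ⁻¹ * (2 / δ) ^ (n / 2 : ℝ) * T ^ (n / 2 : ℝ) *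
        exp (δ * T) * dampedGammaIntegral (n / 2) (2 * δ * T) := by
  rw [setIntegral_ball_comp_inner (g := fun t => exp (δ * t)) hn hdim hw (by fun_prop) hT.le,
    integral_exp_mul_mul_sq_sub_sq_rpow _ hδ hT, mul_div_right_comm,
    mul_rpow (by positivity) hT.le]
  ring

theorem integral_exp_linear_ball_leading_asymptotic
    {V : Type*} [NormedAddCommGroup V] [InnerProductSpace ℝ V]
    [FiniteDimensional ℝ V] [MeasurableSpace V] [BorelSpace V]
    (r : ℕ) (hr : 2 ≤ r) (hdim : Module.finrank ℝ V = r)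
    (δ : ℝ) (hδ : 0 < δ)
    (ω₀ : ℝ)
    (hω₀ : ω₀ = 2 ^ (((r : ℝ) - 1) / 2) * δ ^ (-((r : ℝ) + 1) / 2) *
      (Real.pi ^ (((r : ℝ) - 1) / 2) / Real.Gamma (((r : ℝ) - 1) / 2 + 1)) *
      ∫ x in Set.Ici (0:ℝ), Real.exp (-x) * x ^ (((r : ℝ) - 1) / 2))
    (ℓ : V →L[ℝ] ℝ) (vlam : V) (hvlam : ‖vlam‖ = 1)
    (hℓvlam : ℓ vlam = δ) (hmax : ∀ v : V, ‖v‖ ≤ 1 → ℓ v ≤ δ) :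
    ∃ C > (0:ℝ), ∀ T : ℝ, 0 < T →
      |(∫ v in Metric.ball (0 : V) T, Real.exp (ℓ v)) -
          ω₀ * T ^ (((r : ℝ) - 1) / 2) * Real.exp (δ * T)|
        ≤ C * T ^ (((r : ℝ) - 3) / 2) * Real.exp (δ * T) := by
  obtain ⟨n, rfl⟩ : ∃ n, r = n + 1 := ⟨r - 1, by omega⟩
  set p : ℝ := n / 2
  have hp : 0 ≤ p := by positivity
  have hr₁ : (((n + 1 : ℕ) : ℝ) - 1) / 2 = p := by push_cast; ring
  have hr₂ : -(((n + 1 : ℕ) : ℝ) + 1) / 2 = -(p + 1) := by push_cast; ring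
  have hr₃ : (((n + 1 : ℕ) : ℝ) - 3) / 2 = p - 1 := by push_cast; ring
  set κ := π ^ p / Gamma (p + 1) * δ⁻¹ * (2 / δ) ^ p
  refine ⟨κ * (max 1 p * Gamma (p + 2) / (2 * δ)), by positivity, fun T hT => ?_⟩
  have hω : ω₀ = κ * Gamma (p + 1) := by
    rw [hω₀, hr₁, hr₂, integral_Ici_eq_integral_Ioi,
      integral_exp_neg_mul_rpow_eq_Gamma (by linarith), rpow_neg hδ.le, rpow_add_one hδ.ne']
    simp only [κ, div_rpow zero_le_two hδ.le]
    ring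
  have hball : ∫ v in ball (0 : V) T, exp (ℓ v) =
      κ * T ^ p * exp (δ * T) * dampedGammaIntegral p (2 * δ * T) := by
    simp_rw [apply_eq_mul_inner_of_forall_norm_le_one hvlam hℓvlam hmax]
    exact setIntegral_ball_exp_mul_inner (by omega) hdim hvlam hδ hT
  rw [hr₁, hr₃, hball, hω, rpow_sub_one hT.ne']
  calc |κ * T ^ p * exp (δ * T) * dampedGammaIntegral p (2 * δ * T) -
          κ * Gamma (p + 1) * T ^ p * exp (δ * T)|
      = |κ * T ^ p * exp (δ * T) * (dampedGammaIntegral p (2 * δ * T) - Gamma (p + 1))| := by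
        congr 1; ring
    _ = κ * T ^ p * exp (δ * T) * |dampedGammaIntegral p (2 * δ * T) - Gamma (p + 1)| := by
        rw [abs_mul, abs_of_pos (by positivity)]
    _ ≤ κ * T ^ p * exp (δ * T) * (max 1 p * Gamma (p + 2) / (2 * δ * T)) := by
        gcongr
        exact abs_dampedGammaIntegral_sub_Gamma_le hp (by positivity)
    _ = _ := by field_simp
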